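/- Let k be algebraically closed with char k ≠ 2, 3, let g_a = Diag(a, 1, 1/a) ∈ PGL(3, k) for a ∈ k^×, and let z₅ = (V(x₀(x₀x₂ + x₁(x₁ + x₂))), V(x₂)). Then g_a · z₅ = (V(x₀(x₀x₂ + x₁(x₁ + a x₂))), V(x₂)), and as a → 0 this family converges (in the parameter space of (cubic, line) pairs ℙ(S³V) × ℙ(V)) to z₇ = (V(x₀(x₀x₂ + x₁²)), V(x₂)). -/

import Mathlib

open MvPolynomial

section DiagonalSubstitution

variable {k : Type*} [Field k]

-- `x₀²x₂` and `x₀x₁²` pick up `a⁻¹` while `x₀x₁x₂` is fixed, so after factoring out `a⁻¹`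
-- the latter carries the coefficient `a`.
lemma aeval_diag_cubic_z₅ {a : k} (ha : a ≠ 0) :
    aeval (R := k) (![C a⁻¹ * X 0, X 1, C a * X 2] : Fin 3 → MvPolynomial (Fin 3) k)
        (X 0 * (X 0 * X 2 + X 1 * (X 1 + X 2)))
      = a⁻¹ • (X 0 * (X 0 * X 2 + X 1 * (X 1 + C a * X 2))) := by
  have hC : (C a⁻¹ : MvPolynomial (Fin 3) k) * C a = 1 := by
    rw [← C_mul, inv_mul_cancel₀ ha, C_1]
  simp only [map_mul, map_add, aeval_X, Matrix.cons_val_zero, Matrix.cons_val_one,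
    Matrix.cons_val_two, Matrix.head_cons, Matrix.tail_cons, smul_eq_C_mul]
  linear_combination (X 0 ^ 2 * X 2 * C a⁻¹ : MvPolynomial (Fin 3) k) * hC

lemma aeval_diag_X_two (a : k) :
    aeval (R := k) (![C a⁻¹ * X 0, X 1, C a * X 2] : Fin 3 → MvPolynomial (Fin 3) k)
        (X 2 : MvPolynomial (Fin 3) k)
      = a • (X 2 : MvPolynomial (Fin 3) k) := by
  simp [smul_eq_C_mul]

end DiagonalSubstitution

theorem stmt7 {k : Type*} [Field k] :
    (∀ a : k, a ≠ 0 →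
      ∃ c d : k, c ≠ 0 ∧ d ≠ 0 ∧
        aeval (R := k) (![C a⁻¹ * X 0, X 1, C a * X 2] : Fin 3 → MvPolynomial (Fin 3) k)
            (X 0 * (X 0 * X 2 + X 1 * (X 1 + X 2)))
          = c • (X 0 * (X 0 * X 2 + X 1 * (X 1 + C a * X 2))) ∧
        aeval (R := k) (![C a⁻¹ * X 0, X 1, C a * X 2] : Fin 3 → MvPolynomial (Fin 3) k)
            (X 2 : MvPolynomial (Fin 3) k)
          = d • (X 2 : MvPolynomial (Fin 3) k)) ∧
    (fun a : k => X 0 * (X 0 * X 2 + X 1 * (X 1 + C a * X 2)) : k → MvPolynomial (Fin 3) k) 0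
      = X 0 * (X 0 * X 2 + X 1 ^ 2) := by
  refine ⟨fun a ha => ⟨a⁻¹, a, inv_ne_zero ha, ha, aeval_diag_cubic_z₅ ha, aeval_diag_X_two a⟩, ?_⟩
  simp only [C_0]
  ring
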